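/- arXiv:2107.06331 — 2 statements merged into one kernel-verified Lean document; each statement's English description precedes it below -/
import Mathlib

section
/- Consider the set 𝒢 of congestion games with at most n users and resource cost functions in 𝓛 for positive basis functions b_1,…,b_m with b_j(1) = 1. Let T be a linear local incentive mechanism and set F_j(x) = b_j(x) + T(b_j)(x) for x ∈ {1,…,n}; assume F_j(1) = 1 and F_j(x) > 0 for all x. Then for every j ∈ {1,…,m} and all integers 0 ≤ v < u ≤ n: PoS(T) ≥ b_j(u)·u / [b_j(v)·v + Σ_{k=1}^{u−v} max_{v+k ≤ x ≤ u} F_j(x)]. -/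
/-!
Fix `j`, `v < u` and `ε > 0`, and let `M_k` be the maximum of `F_j` on `[v + k, u]`. Take `u` users
and one common resource with cost `b_j`; users `i ≥ v` (numbered from `0`) also have a private
resource with cost `(M_{i+1-v} + ε)·b_j`. By linearity of `T` a private resource charges its sole
user `(M_{i+1-v} + ε)·F_j(1) = M_{i+1-v} + ε`, while if `i` is the first user off the common
resource, joining it costs `F_j(x) ≤ M_{i+1-v}` for some `x ∈ [i + 1, u]`. So the only equilibrium
puts everybody on the common resource, at cost `u·b_j(u)`, whereas keeping users `i ≥ v` private
costs `v·b_j(v) + ∑_k (M_k + ε)`. Let `ε → 0`.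
-/

open scoped BigOperators ENNReal

noncomputable section

/-- A congestion game with incentives: `n` users, `R` resources,
finite nonempty action sets `act i ⊆ 2^E`, resource cost functions `cost e`
and incentive functions `tax e`. -/
structure CGame where
  n : ℕ
  R : ℕ
  act : Fin n → Finset (Finset (Fin R))
  act_ne : ∀ i, (act i).Nonempty
  cost : Fin R → ℕ → ℝ
  tax : Fin R → ℕ → ℝ

namespace CGame

variable (G : CGame)

/-- An assignment of actions (not necessarily feasible). -/
abbrev Assign := Fin G.n → Finset (Fin G.R)

/-- Feasibility of an assignment. -/
def IsAssign (a : G.Assign) : Prop := ∀ i, a i ∈ G.act i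

/-- The load `|a|_e`: the number of users selecting resource `e`. -/
def load (a : G.Assign) (e : Fin G.R) : ℕ :=
  (Finset.univ.filter fun i => e ∈ a i).card

/-- The social cost `SC(a)`. -/
def SC (a : G.Assign) : ℝ := ∑ i, ∑ e ∈ a i, G.cost e (G.load a e)

/-- The cost `C_i(a)` experienced by user `i` (resource costs plus incentives). -/
def userCost (i : Fin G.n) (a : G.Assign) : ℝ :=
  ∑ e ∈ a i, (G.cost e (G.load a e) + G.tax e (G.load a e))

/-- Pure Nash equilibrium. -/
def IsNE (a : G.Assign) : Prop :=
  G.IsAssign a ∧ ∀ i : Fin G.n, ∀ s ∈ G.act i,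
    G.userCost i a ≤ G.userCost i (Function.update a i s)

/-- The Rosenthal potential of the game with incentives. -/
def potential (a : G.Assign) : ℝ :=
  ∑ e, ∑ k ∈ Finset.Icc 1 (G.load a e), (G.cost e k + G.tax e k)

/-- The minimum achievable social cost. -/
def MinCost : ℝ := sInf {c | ∃ a, G.IsAssign a ∧ G.SC a = c}

end CGame

/-- A (local) incentive mechanism: a map from resource cost functions to
incentive functions. -/
abbrev Mech : Type := (ℕ → ℝ) → (ℕ → ℝ)

/-- Membership of a game in the class `𝒢` of congestion games with at most `n`
users, resource cost functions that are nonnegative linear combinations of the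
basis functions `b`, and incentives generated by the mechanism `T`. -/
def InClass (n m : ℕ) (b : Fin m → ℕ → ℝ) (T : Mech) (G : CGame) : Prop :=
  G.n ≤ n ∧
  (∀ e, ∃ α : Fin m → ℝ, (∀ j, 0 ≤ α j) ∧ ∀ x, G.cost e x = ∑ j, α j * b j x) ∧
  (∀ e x, G.tax e x = T (G.cost e) x)

/-- Price of anarchy of mechanism `T` over the class of congestion games with
at most `n` users and costs generated by the basis `b`. -/
def PoA (n m : ℕ) (b : Fin m → ℕ → ℝ) (T : Mech) : ℝ≥0∞ :=
  ⨆ G : CGame, ⨆ _ : InClass n m b T G ∧ 0 < G.MinCost,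
    ⨆ a : G.Assign, ⨆ _ : G.IsNE a, ENNReal.ofReal (G.SC a / G.MinCost)

/-- Price of stability of mechanism `T` over the class of congestion games with
at most `n` users and costs generated by the basis `b`. -/
def PoS (n m : ℕ) (b : Fin m → ℕ → ℝ) (T : Mech) : ℝ≥0∞ :=
  ⨆ G : CGame, ⨆ _ : InClass n m b T G ∧ 0 < G.MinCost,
    ⨅ a : {a : G.Assign // G.IsNE a}, ENNReal.ofReal (G.SC a.1 / G.MinCost)

/-- The marginal cost mechanism `T^mc(ℓ)(x) = (x−1)·[ℓ(x) − ℓ(x−1)]`. -/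
def Tmc : Mech := fun ℓ x => ((x : ℝ) - 1) * (ℓ x - ℓ (x - 1))

open Finset

theorem sum_Ico_add_one_eq_sum_Icc {M : Type*} [AddCommMonoid M] (f : ℕ → M) {u v : ℕ}
    (h : v ≤ u) : ∑ i ∈ Ico v u, f (i + 1) = ∑ k ∈ Icc 1 (u - v), f (v + k) := by
  rw [sum_Ico_add', ← Finset.Ico_add_one_right_eq_Icc, sum_Ico_add, add_comm 1 v,
    ← Nat.sub_add_comm h, Nat.sub_add_cancel (by omega)]

theorem ofReal_div_le_of_forall_pos {N d K : ℝ} {P : ℝ≥0∞} (hd : d ≠ 0)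
    (h : ∀ ε > 0, ENNReal.ofReal (N / (d + K * ε)) ≤ P) : ENNReal.ofReal (N / d) ≤ P := by
  have hlim : Filter.Tendsto (fun ε => ENNReal.ofReal (N / (d + K * ε)))
      (nhdsWithin 0 (Set.Ioi 0)) (nhds (ENNReal.ofReal (N / d))) := by
    refine (ENNReal.continuous_ofReal.tendsto _).comp
      (tendsto_const_nhds.div (Filter.Tendsto.mono_left ?_ nhdsWithin_le_nhds) hd)
    exact (by fun_prop : Continuous fun ε : ℝ => d + K * ε).tendsto' 0 d (by simp)
  exact le_of_tendsto hlim (eventually_nhdsWithin_of_forall h)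

namespace CGame

variable (G : CGame)

theorem load_le (a : G.Assign) (e : Fin G.R) : G.load a e ≤ G.n :=
  (card_filter_le _ _).trans (card_fin _).le

theorem one_le_load {a : G.Assign} {i : Fin G.n} {e : Fin G.R} (he : e ∈ a i) :
    1 ≤ G.load a e :=
  card_pos.mpr ⟨i, mem_filter.mpr ⟨mem_univ i, he⟩⟩

theorem load_update_of_mem_of_notMem {a : G.Assign} {i : Fin G.n} {s : Finset (Fin G.R)}
    {e : Fin G.R} (hs : e ∈ s) (ha : e ∉ a i) :
    G.load (Function.update a i s) e = G.load a e + 1 := by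
  have : (univ.filter fun i' => e ∈ Function.update a i s i') =
      insert i (univ.filter fun i' => e ∈ a i') := by
    ext i'
    by_cases hi : i' = i
    · subst hi; simp [hs]
    · simp [hi]
  rw [load, this, card_insert_of_notMem (by simp [ha])]
  rfl

theorem userCost_of_eq_singleton {a : G.Assign} {i : Fin G.n} {e : Fin G.R} (h : a i = {e}) :
    G.userCost i a = G.cost e (G.load a e) + G.tax e (G.load a e) := by
  rw [userCost, h, sum_singleton]

theorem finite_setOf_SC : {c | ∃ a, G.IsAssign a ∧ G.SC a = c}.Finite :=
  (Set.finite_range G.SC).subset fun _ ⟨a, _, hc⟩ => ⟨a, hc⟩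

theorem MinCost_le {a : G.Assign} (ha : G.IsAssign a) : G.MinCost ≤ G.SC a :=
  csInf_le G.finite_setOf_SC.bddBelow ⟨a, ha, rfl⟩

theorem MinCost_pos (hn : 0 < G.n) (hact : ∀ i, ∀ s ∈ G.act i, s.Nonempty)
    (hcost : ∀ e x, 1 ≤ x → x ≤ G.n → 0 < G.cost e x) : 0 < G.MinCost := by
  have hne : {c | ∃ a, G.IsAssign a ∧ G.SC a = c}.Nonempty :=
    ⟨_, fun i => (G.act_ne i).choose, fun i => (G.act_ne i).choose_spec, rfl⟩
  obtain ⟨a, ha, hmin⟩ := hne.csInf_mem G.finite_setOf_SC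
  rw [MinCost, ← hmin, SC]
  refine sum_pos (fun i _ => sum_pos (fun e he => hcost e _ (G.one_le_load he) (G.load_le a e))
    (hact i _ (ha i))) ⟨⟨0, hn⟩, mem_univ _⟩

end CGame

theorem ofReal_le_PoS {n m : ℕ} {b : Fin m → ℕ → ℝ} {T : Mech} {G : CGame} {r : ℝ}
    (hG : InClass n m b T G) (hpos : 0 < G.MinCost)
    (h : ∀ a, G.IsNE a → r ≤ G.SC a / G.MinCost) : ENNReal.ofReal r ≤ PoS n m b T :=
  le_iSup₂_of_le G ⟨hG, hpos⟩ (le_iInf fun a => ENNReal.ofReal_le_ofReal (h a.1 a.2))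

theorem Mech.map_smul_basis {m : ℕ} {b : Fin m → ℕ → ℝ} {T : Mech}
    (hT : ∀ α : Fin m → ℝ, (∀ j, 0 ≤ α j) →
      ∀ x, T (fun y => ∑ j, α j * b j y) x = ∑ j, α j * T (b j) x)
    (j : Fin m) {r : ℝ} (hr : 0 ≤ r) (x : ℕ) : T (fun y => r * b j y) x = r * T (b j) x := by
  have := hT (Pi.single j r) (fun j' => by by_cases h : j' = j <;> simp [h, hr]) x
  simpa [Pi.single_apply, ite_mul] using this

namespace LowerBound

def weight (c : ℕ → ℝ) {u : ℕ} : Fin (u + 1) → ℝ := Fin.cons (1 : ℝ) fun i : Fin u => c i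

@[simp] theorem weight_zero (c : ℕ → ℝ) (u : ℕ) : weight c (0 : Fin (u + 1)) = 1 := rfl

@[simp] theorem weight_succ (c : ℕ → ℝ) {u : ℕ} (i : Fin u) : weight c i.succ = c i := rfl

theorem weight_pos {c : ℕ → ℝ} {u : ℕ} (hc : ∀ i : Fin u, 0 < c i) (e : Fin (u + 1)) :
    0 < weight c e := by
  induction e using Fin.cases <;> simp [hc]

/-- Users `i < v` must use the common resource `0`; user `i ≥ v` may instead use its private
resource `i.succ`, whose cost is `c i` times that of the common one. -/
abbrev game (ℓ : ℕ → ℝ) (T : Mech) (c : ℕ → ℝ) (u v : ℕ) : CGame where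
  n := u
  R := u + 1
  act i := if (i : ℕ) < v then {{0}} else {{0}, {i.succ}}
  act_ne i := by split <;> simp
  cost e x := weight c e * ℓ x
  tax e x := T (fun y => weight c e * ℓ y) x

def privateAssign (ℓ : ℕ → ℝ) (T : Mech) (c : ℕ → ℝ) (u v : ℕ) : (game ℓ T c u v).Assign :=
  fun i => if (i : ℕ) < v then {0} else {i.succ}

variable {ℓ : ℕ → ℝ} {T : Mech} {c : ℕ → ℝ} {u v : ℕ}

theorem mem_act {i : Fin u} {s : Finset (Fin (u + 1))} (hs : s ∈ (game ℓ T c u v).act i) :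
    s = {0} ∨ v ≤ i ∧ s = {i.succ} := by
  simp only [game] at hs
  split_ifs at hs with h
  · exact .inl (mem_singleton.mp hs)
  · rcases mem_insert.mp hs with hs | hs
    exacts [.inl hs, .inr ⟨not_lt.mp h, mem_singleton.mp hs⟩]

theorem eq_zero_or_eq_succ {a : (game ℓ T c u v).Assign} (ha : (game ℓ T c u v).IsAssign a)
    (i : Fin u) : a i = {0} ∨ a i = {i.succ} :=
  (mem_act (ha i)).imp_right And.right

theorem zero_mem_iff {a : (game ℓ T c u v).Assign} (ha : (game ℓ T c u v).IsAssign a)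
    (i : Fin u) : 0 ∈ a i ↔ a i = {0} := by
  rcases eq_zero_or_eq_succ ha i with h | h <;> simp [h, (Fin.succ_ne_zero i).symm]

theorem load_zero {a : (game ℓ T c u v).Assign} (ha : (game ℓ T c u v).IsAssign a) :
    (game ℓ T c u v).load a 0 = #{i | a i = {0}} :=
  congrArg card (filter_congr fun i _ => zero_mem_iff ha i)

theorem load_succ {a : (game ℓ T c u v).Assign} (ha : (game ℓ T c u v).IsAssign a)
    {i : Fin u} (hi : a i = {i.succ}) : (game ℓ T c u v).load a i.succ = 1 := by
  refine card_eq_one.mpr ⟨i, eq_singleton_iff_unique_mem.mpr ⟨by simp [hi], fun i' hi' => ?_⟩⟩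
  rcases eq_zero_or_eq_succ ha i' with h | h <;> simp_all [Fin.succ_ne_zero]

theorem tax_eq (hT : ∀ r, 0 ≤ r → ∀ x, T (fun y => r * ℓ y) x = r * T ℓ x)
    (hc : ∀ i : Fin u, 0 < c i) (e : Fin (u + 1)) (x : ℕ) :
    (game ℓ T c u v).tax e x = weight c e * T ℓ x :=
  hT _ (weight_pos hc e).le x

theorem singleton_zero_mem_act (i : Fin u) : {0} ∈ (game ℓ T c u v).act i := by
  simp only [game]
  split_ifs <;> simp

theorem le_load_zero {a : (game ℓ T c u v).Assign} (ha : (game ℓ T c u v).IsAssign a) {i : Fin u}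
    (h : ∀ i' < i, a i' = {0}) : (i : ℕ) ≤ (game ℓ T c u v).load a 0 := by
  rw [load_zero ha, ← Fin.card_Iio]
  exact card_le_card fun i' hi' => mem_filter.mpr ⟨mem_univ _, h i' (mem_Iio.mp hi')⟩

/-- If `i` is the first user off the common resource, at least `i` users share it, so moving
there would cost `i` only `ℓ x + T ℓ x` for some `x ∈ [i + 1, u]`, less than the `c i` it pays. -/
theorem eq_zero_of_isNE (hT : ∀ r, 0 ≤ r → ∀ x, T (fun y => r * ℓ y) x = r * T ℓ x)
    (hc : ∀ i : Fin u, 0 < c i) (hF1 : ℓ 1 + T ℓ 1 = 1)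
    (hdev : ∀ i : Fin u, ∀ x, (i : ℕ) + 1 ≤ x → x ≤ u → ℓ x + T ℓ x < c i)
    {a : (game ℓ T c u v).Assign} (ha : (game ℓ T c u v).IsNE a) (i : Fin u) : a i = {0} := by
  by_contra! h
  obtain ⟨i, hi, hmin⟩ := wellFounded_lt.has_min {i | a i ≠ {0}} ⟨i, h⟩
  have hpriv : a i = {i.succ} := (eq_zero_or_eq_succ ha.1 i).resolve_left hi
  have hL : (i : ℕ) ≤ (game ℓ T c u v).load a 0 :=
    le_load_zero ha.1 fun i' hi' => by_contra fun h' => hmin i' h' hi'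
  have hload : (game ℓ T c u v).load (Function.update a i {0}) 0 =
      (game ℓ T c u v).load a 0 + 1 :=
    CGame.load_update_of_mem_of_notMem _ (mem_singleton_self 0)
      (by simp [hpriv, (Fin.succ_ne_zero i).symm])
  have hLu : (game ℓ T c u v).load a 0 + 1 ≤ u := hload ▸ CGame.load_le _ _ 0
  have hstay : (game ℓ T c u v).userCost i a = c i := by
    rw [CGame.userCost_of_eq_singleton _ hpriv, tax_eq hT hc, load_succ ha.1 hpriv]
    simp [← mul_add, hF1]
  have hmove := ha.2 i {0} (singleton_zero_mem_act i)
  rw [hstay, CGame.userCost_of_eq_singleton _ (Function.update_self i _ a), tax_eq hT hc,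
    hload] at hmove
  have := hdev i _ (by omega) hLu
  simp only [weight_zero, one_mul] at hmove
  linarith

theorem SC_of_forall_eq_zero {a : (game ℓ T c u v).Assign} (h : ∀ i, a i = {0}) :
    (game ℓ T c u v).SC a = ℓ u * u := by
  have hload : (game ℓ T c u v).load a 0 = u := by
    simp [CGame.load, h]
  simp [CGame.SC, h, hload, mul_comm]

theorem isAssign_privateAssign : (game ℓ T c u v).IsAssign (privateAssign ℓ T c u v) := by
  intro i
  by_cases h : (i : ℕ) < v <;> simp [privateAssign, h]

theorem SC_privateAssign (hℓ1 : ℓ 1 = 1) (hvu : v ≤ u) :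
    (game ℓ T c u v).SC (privateAssign ℓ T c u v) = ℓ v * v + ∑ i ∈ Ico v u, c i := by
  have ha := isAssign_privateAssign (ℓ := ℓ) (T := T) (c := c) (u := u) (v := v)
  have hload : (game ℓ T c u v).load (privateAssign ℓ T c u v) 0 = v := by
    rw [load_zero ha]
    refine (congrArg card ?_).trans (Fin.card_filter_val_lt.trans (min_eq_right hvu))
    ext i
    by_cases h : (i : ℕ) < v <;> simp [privateAssign, h]
  have hcost : ∀ i : Fin u, ∑ e ∈ privateAssign ℓ T c u v i,
      (game ℓ T c u v).cost e ((game ℓ T c u v).load (privateAssign ℓ T c u v) e) =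
        if (i : ℕ) < v then ℓ v else c i := by
    intro i
    by_cases h : (i : ℕ) < v
    · simp [privateAssign, h, hload]
    · have hpriv : privateAssign ℓ T c u v i = {i.succ} := by simp [privateAssign, h]
      simp [hpriv, load_succ ha hpriv, hℓ1, h]
  rw [CGame.SC, Fintype.sum_congr _ _ hcost, Fin.sum_univ_eq_sum_range
    (fun i => if i < v then ℓ v else c i), ← sum_range_add_sum_Ico _ hvu,
    sum_congr rfl fun i hi => if_pos (mem_range.mp hi),
    sum_congr rfl fun i hi => if_neg (not_lt.mpr (mem_Ico.mp hi).1)]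
  simp [mul_comm]

theorem inClass_game {n m : ℕ} {b : Fin m → ℕ → ℝ} (j : Fin m) (hun : u ≤ n)
    (hc : ∀ i : Fin u, 0 < c i) : InClass n m b T (game (b j) T c u v) := by
  refine ⟨hun, fun e => ⟨Pi.single j (weight c e), fun j' => ?_, fun x => ?_⟩, fun _ _ => rfl⟩
  · by_cases h : j' = j <;> simp [h, (weight_pos hc e).le]
  · simp [Pi.single_apply, ite_mul]

theorem MinCost_pos (hu : 0 < u) (hℓ : ∀ x, 1 ≤ x → x ≤ u → 0 < ℓ x)
    (hc : ∀ i : Fin u, 0 < c i) : 0 < (game ℓ T c u v).MinCost := by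
  refine CGame.MinCost_pos _ hu (fun i s hs => ?_)
    (fun e x h1 h2 => mul_pos (weight_pos hc e) (hℓ x h1 h2))
  rcases mem_act hs with rfl | ⟨-, rfl⟩ <;> exact singleton_nonempty _

theorem ofReal_div_le_PoS {n m : ℕ} {b : Fin m → ℕ → ℝ} (j : Fin m)
    (hT : ∀ α : Fin m → ℝ, (∀ j, 0 ≤ α j) →
      ∀ x, T (fun y => ∑ j, α j * b j y) x = ∑ j, α j * T (b j) x)
    (hb : ∀ x, 1 ≤ x → x ≤ u → 0 < b j x) (hb1 : b j 1 = 1) (hF1 : b j 1 + T (b j) 1 = 1)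
    (hvu : v < u) (hun : u ≤ n) (hc : ∀ i : Fin u, 0 < c i)
    (hdev : ∀ i : Fin u, ∀ x, (i : ℕ) + 1 ≤ x → x ≤ u → b j x + T (b j) x < c i) :
    ENNReal.ofReal (b j u * u / (b j v * v + ∑ i ∈ Ico v u, c i)) ≤ PoS n m b T := by
  have hpos := MinCost_pos (T := T) (v := v) (by omega) hb hc
  refine ofReal_le_PoS (inClass_game j hun hc) hpos fun a ha => ?_
  rw [SC_of_forall_eq_zero (eq_zero_of_isNE (fun r hr => Mech.map_smul_basis hT j hr) hc hF1
    hdev ha), ← SC_privateAssign hb1 hvu.le]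
  have := hb u (by omega) le_rfl
  gcongr
  exact CGame.MinCost_le _ isAssign_privateAssign

end LowerBound

theorem PoS_lower_bound_for_linear_mechanisms_general
    (n m : ℕ)
    (b : Fin m → ℕ → ℝ)
    (hb1 : ∀ j, b j 1 = 1)
    (hbpos : ∀ j, ∀ x : ℕ, 1 ≤ x → x ≤ n → 0 < b j x)
    (T : Mech)
    (hTlin : ∀ α : Fin m → ℝ, (∀ j, 0 ≤ α j) →
      ∀ x, T (fun y => ∑ j, α j * b j y) x = ∑ j, α j * T (b j) x)
    (F : Fin m → ℕ → ℝ)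
    (hF : ∀ j, ∀ x : ℕ, 1 ≤ x → x ≤ n → F j x = b j x + T (b j) x)
    (hF1 : ∀ j, F j 1 = 1)
    (hFpos : ∀ j, ∀ x : ℕ, 1 ≤ x → x ≤ n → 0 < F j x) :
    ∀ j : Fin m, ∀ u v : ℕ, v < u → u ≤ n →
      ENNReal.ofReal (b j u * u /
          (b j v * v + ∑ k ∈ Finset.Icc 1 (u - v), sSup (F j '' Set.Icc (v + k) u)))
        ≤ PoS n m b T := by
  intro j u v hvu hun
  set M : ℕ → ℝ := fun k => sSup (F j '' Set.Icc k u)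
  have le_M : ∀ k x, k ≤ x → x ≤ u → F j x ≤ M k := fun k x h1 h2 =>
    le_csSup ((Set.finite_Icc k u).image _).bddAbove ⟨x, ⟨h1, h2⟩, rfl⟩
  have M_pos : ∀ k ≤ u, 0 < M k := fun k hk =>
    (hFpos j u (by omega) hun).trans_le (le_M k u hk le_rfl)
  have hden : 0 < b j v * v + ∑ k ∈ Icc 1 (u - v), M (v + k) := by
    have : 0 ≤ b j v * v := by
      rcases v.eq_zero_or_pos with rfl | hv
      · simp
      · exact mul_nonneg (hbpos j v hv (by omega)).le v.cast_nonneg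
    have : 0 < ∑ k ∈ Icc 1 (u - v), M (v + k) :=
      sum_pos (fun k hk => M_pos (v + k) (by have := mem_Icc.mp hk; omega))
        ⟨1, mem_Icc.mpr ⟨le_rfl, by omega⟩⟩
    linarith
  refine ofReal_div_le_of_forall_pos (K := ((u - v : ℕ) : ℝ)) hden.ne' fun ε hε => ?_
  have key := LowerBound.ofReal_div_le_PoS (c := fun i => M (i + 1) + ε) (v := v) j hTlin
    (fun x h1 h2 => hbpos j x h1 (h2.trans hun)) (hb1 j) (hF j 1 le_rfl (by omega) ▸ hF1 j)
    hvu hun (fun i => add_pos (M_pos _ i.isLt) hε) (fun i x h1 h2 => by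
      rw [← hF j x (by omega) (h2.trans hun)]
      exact (le_M _ x h1 h2).trans_lt (lt_add_of_pos_right _ hε))
  rwa [sum_add_distrib, sum_Ico_add_one_eq_sum_Icc M hvu.le, sum_const, Nat.card_Ico,
    nsmul_eq_mul, ← add_assoc] at key

/-- Over congestion games with at most `n` users and costs
generated by positive basis functions with `b_j(1) = 1`: for any linear local
mechanism `T`, setting `F_j = b_j + T(b_j)` (assumed positive with
`F_j(1) = 1`), for every `j` and all integers `0 ≤ v < u ≤ n`,
`PoS(T) ≥ b_j(u)·u / [b_j(v)·v + Σ_{k=1}^{u−v} max_{v+k ≤ x ≤ u} F_j(x)]`. -/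
theorem PoS_lower_bound_for_linear_mechanisms
    (n m : ℕ)
    (b : Fin m → ℕ → ℝ)
    (hb0 : ∀ j, b j 0 = 0) (hb1 : ∀ j, b j 1 = 1)
    (hbpos : ∀ j, ∀ x : ℕ, 1 ≤ x → x ≤ n → 0 < b j x)
    (T : Mech)
    (hTlin : ∀ α : Fin m → ℝ, (∀ j, 0 ≤ α j) →
      ∀ x, T (fun y => ∑ j, α j * b j y) x = ∑ j, α j * T (b j) x)
    (F : Fin m → ℕ → ℝ)
    (hF : ∀ j, ∀ x : ℕ, 1 ≤ x → x ≤ n → F j x = b j x + T (b j) x)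
    (hF1 : ∀ j, F j 1 = 1)
    (hFpos : ∀ j, ∀ x : ℕ, 1 ≤ x → x ≤ n → 0 < F j x) :
    ∀ j : Fin m, ∀ u v : ℕ, v < u → u ≤ n →
      ENNReal.ofReal (b j u * u /
          (b j v * v + ∑ k ∈ Finset.Icc 1 (u - v), sSup (F j '' Set.Icc (v + k) u)))
        ≤ PoS n m b T :=
  PoS_lower_bound_for_linear_mechanisms_general n m b hb1 hbpos T hTlin F hF hF1 hFpos
end
end

section
/- Let 𝒢 be a set of congestion games with incentives, each with at most n users and MinCost(G) > 0, and suppose there exist ζ > 0, λ > 0 and μ < 1 such that for every game G ∈ 𝒢 and every pair of assignments a, a' ∈ A: SC(a) + Σ_{i=1}^n [C_i(a'_i, a_{−i}) − C_i(a)] + ζ[Φ(a') − Φ(a)] ≤ λ SC(a') + μ SC(a). Then for every G ∈ 𝒢, every assignment a^pm minimizing the Rosenthal potential Φ is a pure Nash equilibrium and satisfies SC(a^pm) ≤ (λ/(1−μ))·MinCost(G); consequently the price of stochastic anarchy PoSA = sup_{G∈𝒢} SC(a^pm)/MinCost(G) is at most λ/(1−μ). -/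
open scoped BigOperators ENNReal

noncomputable section

/-!
By Rosenthal's identity a unilateral deviation changes the potential exactly as much as the
deviator's cost, so a potential minimizer is a pure Nash equilibrium. At a minimizer both the
deviation sum and `ζ (Φ(a') - Φ(a^pm))` in the smoothness inequality are therefore nonnegative,
leaving `SC(a^pm) ≤ λ SC(a') + μ SC(a^pm)` for every feasible `a'`. The assignment space is
finite, so `MinCost` is attained, and choosing `a'` optimal gives the bound.
-/

lemma Finset.sum_Icc_one_add_ite {M : Type*} [AddCommMonoid M] (f : ℕ → M) (m : ℕ)
    (p : Prop) [Decidable p] :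
    ∑ k ∈ Finset.Icc 1 (m + if p then 1 else 0), f k
      = ∑ k ∈ Finset.Icc 1 m, f k + if p then f (m + 1) else 0 := by
  split_ifs
  · exact Finset.sum_Icc_succ_top (by omega) f
  · simp

namespace CGame

variable (G : CGame)

/-- `|a_{-i}|_e`, the load on `e` caused by the users other than `i`. -/
def loadExcept (a : G.Assign) (i : Fin G.n) (e : Fin G.R) : ℕ :=
  ((Finset.univ.erase i).filter fun j => e ∈ a j).card

lemma load_eq_loadExcept_add (a : G.Assign) (i : Fin G.n) (e : Fin G.R) :
    G.load a e = G.loadExcept a i e + if e ∈ a i then 1 else 0 := by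
  rw [load, loadExcept, Finset.card_filter, Finset.card_filter,
    ← Finset.sum_erase_add _ _ (Finset.mem_univ i)]

lemma loadExcept_update (a : G.Assign) (i : Fin G.n) (s : Finset (Fin G.R)) (e : Fin G.R) :
    G.loadExcept (Function.update a i s) i e = G.loadExcept a i e := by
  refine congrArg Finset.card (Finset.filter_congr fun j hj => ?_)
  rw [Function.update_of_ne (Finset.ne_of_mem_erase hj)]

lemma potential_sub_userCost (a : G.Assign) (i : Fin G.n) :
    G.potential a - G.userCost i a
      = ∑ e, ∑ k ∈ Finset.Icc 1 (G.loadExcept a i e), (G.cost e k + G.tax e k) := by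
  rw [potential, userCost, ← Finset.univ_inter (a i), ← Finset.sum_ite_mem,
    ← Finset.sum_sub_distrib]
  refine Finset.sum_congr rfl fun e _ => ?_
  rw [load_eq_loadExcept_add G a i e, Finset.sum_Icc_one_add_ite]
  split_ifs <;> simp

lemma potential_update_sub_potential (a : G.Assign) (i : Fin G.n) (s : Finset (Fin G.R)) :
    G.potential (Function.update a i s) - G.potential a
      = G.userCost i (Function.update a i s) - G.userCost i a := by
  have hupdate := G.potential_sub_userCost (Function.update a i s) i
  simp only [loadExcept_update] at hupdate
  linarith [G.potential_sub_userCost a i]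

lemma isAssign_update {a : G.Assign} (ha : G.IsAssign a) {i : Fin G.n}
    {s : Finset (Fin G.R)} (hs : s ∈ G.act i) : G.IsAssign (Function.update a i s) := by
  intro j
  rcases eq_or_ne j i with rfl | hj
  · simpa using hs
  · simpa [Function.update_of_ne hj] using ha j

lemma exists_isAssign_SC_eq_MinCost : ∃ a, G.IsAssign a ∧ G.SC a = G.MinCost := by
  have hne : {c | ∃ a, G.IsAssign a ∧ G.SC a = c}.Nonempty :=
    ⟨_, fun i => (G.act_ne i).choose, fun i => (G.act_ne i).choose_spec, rfl⟩
  have hfin : {c | ∃ a, G.IsAssign a ∧ G.SC a = c}.Finite :=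
    (Set.finite_range G.SC).subset fun _ ⟨a, _, hc⟩ => ⟨a, hc⟩
  exact hne.csInf_mem hfin

def IsPotentialMinimizer (a : G.Assign) : Prop :=
  G.IsAssign a ∧ ∀ b : G.Assign, G.IsAssign b → G.potential a ≤ G.potential b

/-- The generalized smoothness condition with parameters `(ζ, λ, μ)`. -/
def IsSmooth (zeta lam mu : ℝ) : Prop :=
  ∀ a a' : G.Assign, G.IsAssign a → G.IsAssign a' →
    G.SC a + (∑ i, (G.userCost i (Function.update a i (a' i)) - G.userCost i a))
        + zeta * (G.potential a' - G.potential a)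
      ≤ lam * G.SC a' + mu * G.SC a

variable {G}

theorem IsPotentialMinimizer.isNE {a : G.Assign} (ha : G.IsPotentialMinimizer a) : G.IsNE a := by
  refine ⟨ha.1, fun i s hs => ?_⟩
  linarith [ha.2 _ (G.isAssign_update ha.1 hs), G.potential_update_sub_potential a i s]

theorem IsPotentialMinimizer.one_sub_mul_SC_le {zeta lam mu : ℝ}
    (hsmooth : G.IsSmooth zeta lam mu) (hzeta : 0 ≤ zeta) {a : G.Assign}
    (ha : G.IsPotentialMinimizer a) {a' : G.Assign} (ha' : G.IsAssign a') :
    (1 - mu) * G.SC a ≤ lam * G.SC a' := by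
  have hdev : 0 ≤ ∑ i, (G.userCost i (Function.update a i (a' i)) - G.userCost i a) :=
    Finset.sum_nonneg fun i _ => sub_nonneg.2 (ha.isNE.2 i (a' i) (ha' i))
  have hpot : 0 ≤ zeta * (G.potential a' - G.potential a) :=
    mul_nonneg hzeta (sub_nonneg.2 (ha.2 a' ha'))
  linarith [hsmooth a a' ha.1 ha']

theorem IsPotentialMinimizer.SC_le_mul_MinCost {zeta lam mu : ℝ}
    (hsmooth : G.IsSmooth zeta lam mu) (hzeta : 0 ≤ zeta) (hmu : mu < 1) {a : G.Assign}
    (ha : G.IsPotentialMinimizer a) : G.SC a ≤ lam / (1 - mu) * G.MinCost := by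
  obtain ⟨opt, hopt, hSC⟩ := G.exists_isAssign_SC_eq_MinCost
  rw [← hSC, div_mul_eq_mul_div, le_div_iff₀ (sub_pos.2 hmu), mul_comm]
  exact ha.one_sub_mul_SC_le hsmooth hzeta hopt

end CGame

theorem smoothness_PoSA_bound_general (n : ℕ) (𝒢 : Set CGame)
    (h𝒢 : ∀ G ∈ 𝒢, G.n ≤ n ∧ 0 < G.MinCost)
    (zeta lam mu : ℝ) (hzeta : 0 < zeta) (hmu : mu < 1)
    (hsmooth : ∀ G ∈ 𝒢, ∀ a a' : G.Assign, G.IsAssign a → G.IsAssign a' →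
      G.SC a + (∑ i, (G.userCost i (Function.update a i (a' i)) - G.userCost i a))
          + zeta * (G.potential a' - G.potential a)
        ≤ lam * G.SC a' + mu * G.SC a) :
    (∀ G ∈ 𝒢, ∀ apm : G.Assign, G.IsAssign apm →
      (∀ a : G.Assign, G.IsAssign a → G.potential apm ≤ G.potential a) →
      G.IsNE apm ∧ G.SC apm ≤ (lam / (1 - mu)) * G.MinCost) ∧
    (⨆ G : CGame, ⨆ _ : G ∈ 𝒢, ⨆ apm : G.Assign,
        ⨆ _ : G.IsAssign apm ∧ ∀ a : G.Assign, G.IsAssign a →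
          G.potential apm ≤ G.potential a,
        ENNReal.ofReal (G.SC apm / G.MinCost))
      ≤ ENNReal.ofReal (lam / (1 - mu)) := by
  have hbound : ∀ G ∈ 𝒢, ∀ apm : G.Assign, G.IsPotentialMinimizer apm →
      G.SC apm ≤ lam / (1 - mu) * G.MinCost := fun G hG _ hpm =>
    hpm.SC_le_mul_MinCost (hsmooth G hG) hzeta.le hmu
  refine ⟨fun G hG apm hA hmin => ⟨CGame.IsPotentialMinimizer.isNE ⟨hA, hmin⟩,
    hbound G hG apm ⟨hA, hmin⟩⟩, ?_⟩
  refine iSup_le fun G => iSup_le fun hG => iSup_le fun apm => iSup_le fun hpm => ?_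
  exact ENNReal.ofReal_le_ofReal ((div_le_iff₀ (h𝒢 G hG).2).2 (hbound G hG apm hpm))

/-- If a set `𝒢` of congestion games with incentives, each
with at most `n` users and positive minimum cost, satisfies the generalized
smoothness condition with parameters `ζ > 0`, `λ > 0`, `μ < 1`, then in every
`G ∈ 𝒢` every potential minimizer `a^pm` is a pure Nash equilibrium with
`SC(a^pm) ≤ (λ/(1−μ))·MinCost(G)`; consequently the price of stochastic
anarchy is at most `λ/(1−μ)`. -/
theorem smoothness_PoSA_bound (n : ℕ) (𝒢 : Set CGame)
    (h𝒢 : ∀ G ∈ 𝒢, G.n ≤ n ∧ 0 < G.MinCost)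
    (zeta lam mu : ℝ) (hzeta : 0 < zeta) (hlam : 0 < lam) (hmu : mu < 1)
    (hsmooth : ∀ G ∈ 𝒢, ∀ a a' : G.Assign, G.IsAssign a → G.IsAssign a' →
      G.SC a + (∑ i, (G.userCost i (Function.update a i (a' i)) - G.userCost i a))
          + zeta * (G.potential a' - G.potential a)
        ≤ lam * G.SC a' + mu * G.SC a) :
    (∀ G ∈ 𝒢, ∀ apm : G.Assign, G.IsAssign apm →
      (∀ a : G.Assign, G.IsAssign a → G.potential apm ≤ G.potential a) →
      G.IsNE apm ∧ G.SC apm ≤ (lam / (1 - mu)) * G.MinCost) ∧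
    (⨆ G : CGame, ⨆ _ : G ∈ 𝒢, ⨆ apm : G.Assign,
        ⨆ _ : G.IsAssign apm ∧ ∀ a : G.Assign, G.IsAssign a →
          G.potential apm ≤ G.potential a,
        ENNReal.ofReal (G.SC apm / G.MinCost))
      ≤ ENNReal.ofReal (lam / (1 - mu)) :=
  smoothness_PoSA_bound_general n 𝒢 h𝒢 zeta lam mu hzeta hmu hsmooth
end
end
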